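/- arXiv:1002.2106 — 2 statements merged into one kernel-verified Lean document; each statement's English description precedes it below -/
import Mathlib

section
/- Let 𝔤 be a finite-dimensional real nilpotent Lie algebra with an inner product ⟨·,·⟩. Then for any orthonormal basis (e_a) the scalar curvature equals Scal = −¼ Σ_{a,b,c} ⟨e_c,[e_a,e_b]⟩². In particular, if 𝔤 is non-abelian then every inner product on 𝔤 has strictly negative scalar curvature. -/
open scoped BigOperators

variable {L : Type*} [LieRing L] [LieAlgebra ℝ L]

/-- The Ricci tensor of a metric Lie algebra, computed relative to a basis `b`
(assumed orthonormal for the inner product `ip`) and a mean-curvature vector `H`. -/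
noncomputable def lieRicci {n : ℕ} (ip : L →ₗ[ℝ] L →ₗ[ℝ] ℝ) (b : Module.Basis (Fin n) ℝ L)
    (H : L) (x y : L) : ℝ :=
  (1 / 4 : ℝ) * ∑ a : Fin n, ∑ c : Fin n, ip x ⁅b a, b c⁆ * ip y ⁅b a, b c⁆
    - (1 / 2 : ℝ) * ∑ a : Fin n, ip ⁅x, b a⁆ ⁅y, b a⁆
    - (1 / 2 : ℝ) * killingForm ℝ L x y
    - (1 / 2 : ℝ) * (ip ⁅H, x⁆ y + ip ⁅H, y⁆ x)

/-- The scalar curvature of a metric Lie algebra. -/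
noncomputable def lieScal {n : ℕ} (ip : L →ₗ[ℝ] L →ₗ[ℝ] ℝ) (b : Module.Basis (Fin n) ℝ L)
    (H : L) : ℝ :=
  ∑ a : Fin n, lieRicci ip b H (b a) (b a)

/-- `b` is an orthonormal basis for the bilinear form `ip` (this forces `ip` to be a
symmetric positive-definite bilinear form, i.e. an inner product). -/
def IsOrthonormalBasisFor {n : ℕ} (ip : L →ₗ[ℝ] L →ₗ[ℝ] ℝ) (b : Module.Basis (Fin n) ℝ L) : Prop :=
  ∀ i j, ip (b i) (b j) = if i = j then (1 : ℝ) else 0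

/-- `H` is the unique vector with `⟨H, z⟩ = tr (ad z)` for all `z`. -/
def IsMeanCurvatureVector (ip : L →ₗ[ℝ] L →ₗ[ℝ] ℝ) (H : L) : Prop :=
  ∀ z : L, ip H z = LinearMap.trace ℝ L (LieAlgebra.ad ℝ L z)


section Aux

variable {n : ℕ} (ip : L →ₗ[ℝ] L →ₗ[ℝ] ℝ) (b : Module.Basis (Fin n) ℝ L)

lemma ip_apply_eq (hb : IsOrthonormalBasisFor ip b) (v w : L) :
    ip v w = ∑ i, b.repr v i * b.repr w i := by
  have hb' : ∀ i j, ip (b i) (b j) = if i = j then (1 : ℝ) else 0 := hb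
  conv_lhs => rw [← b.sum_repr v, ← b.sum_repr w]
  simp only [map_sum, map_smul, LinearMap.sum_apply, LinearMap.smul_apply, smul_eq_mul, hb',
    mul_ite, mul_one, mul_zero]
  simp [Finset.sum_ite_eq, Finset.sum_ite_eq', mul_comm]

lemma ip_basis_apply (hb : IsOrthonormalBasisFor ip b) (c : Fin n) (v : L) :
    ip (b c) v = b.repr v c := by
  rw [ip_apply_eq ip b hb]
  simp [Module.Basis.repr_self, Finsupp.single_apply]

lemma ip_symm (hb : IsOrthonormalBasisFor ip b) (v w : L) : ip v w = ip w v := by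
  rw [ip_apply_eq ip b hb, ip_apply_eq ip b hb]
  simp [mul_comm]

lemma ip_self_eq_sum_sq (hb : IsOrthonormalBasisFor ip b) (v : L) :
    ip v v = ∑ d, (ip (b d) v) ^ 2 := by
  rw [ip_apply_eq ip b hb]
  simp [ip_basis_apply ip b hb, sq]

end Aux


/-- For a nilpotent metric Lie algebra, the scalar curvature equals
`−¼ Σ_{a,b,c} ⟨e_c, [e_a, e_b]⟩²`; in particular it is strictly negative when the
Lie algebra is non-abelian. -/
theorem nilpotent_scalar_curvature
    (L : Type*) [LieRing L] [LieAlgebra ℝ L] [FiniteDimensional ℝ L]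
    [LieRing.IsNilpotent L]
    (ip : L →ₗ[ℝ] L →ₗ[ℝ] ℝ) (b : Module.Basis (Fin (Module.finrank ℝ L)) ℝ L) (H : L)
    (hb : IsOrthonormalBasisFor ip b) (hH : IsMeanCurvatureVector ip H) :
    lieScal ip b H =
      -(1 / 4 : ℝ) * ∑ a : Fin (Module.finrank ℝ L), ∑ c : Fin (Module.finrank ℝ L),
        ∑ d : Fin (Module.finrank ℝ L), (ip (b d) ⁅b a, b c⁆) ^ 2 ∧
    (¬ IsLieAbelian L → lieScal ip b H < 0) := by
  have htr : ∀ z : L, LinearMap.trace ℝ L (LieAlgebra.ad ℝ L z) = 0 := fun z =>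
    (LinearMap.isNilpotent_trace_of_isNilpotent
      (LieModule.isNilpotent_toEnd_of_isNilpotent ℝ L L z)).eq_zero
  have hH0 : H = 0 := b.forall_coord_eq_zero_iff.mp fun i => by
    have h := hH (b i)
    rw [htr] at h
    rw [Module.Basis.coord_apply, ← ip_basis_apply ip b hb, ip_symm ip b hb, h]
  have hkill : killingForm ℝ L = 0 := LieModule.traceForm_eq_zero_of_isNilpotent ℝ L L
  set S : ℝ := ∑ a : Fin (Module.finrank ℝ L), ∑ c : Fin (Module.finrank ℝ L),
      ∑ d : Fin (Module.finrank ℝ L), (ip (b d) ⁅b a, b c⁆) ^ 2 with hS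
  have key : lieScal ip b H = -(1 / 4 : ℝ) * S := by
    unfold lieScal lieRicci
    simp only [hH0, hkill, zero_lie, map_zero, LinearMap.zero_apply, mul_zero, add_zero,
      sub_zero, LinearMap.map_zero]
    have h1 : ∀ a c d : Fin (Module.finrank ℝ L),
        ip (b d) ⁅b a, b c⁆ * ip (b d) ⁅b a, b c⁆ = (ip (b d) ⁅b a, b c⁆) ^ 2 := by
      intro a c d; ring
    have h2 : ∀ a c : Fin (Module.finrank ℝ L),
        ip ⁅b a, b c⁆ ⁅b a, b c⁆ = ∑ d, (ip (b d) ⁅b a, b c⁆) ^ 2 :=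
      fun a c => ip_self_eq_sum_sq ip b hb _
    rw [Finset.sum_sub_distrib]
    have hA : (∑ d : Fin (Module.finrank ℝ L), (1 / 4 : ℝ) *
        ∑ a : Fin (Module.finrank ℝ L), ∑ c : Fin (Module.finrank ℝ L),
          ip (b d) ⁅b a, b c⁆ * ip (b d) ⁅b a, b c⁆) = (1 / 4 : ℝ) * S := by
      rw [← Finset.mul_sum, hS]
      congr 1
      rw [Finset.sum_comm]
      refine Finset.sum_congr rfl fun a _ => ?_
      rw [Finset.sum_comm]
      exact Finset.sum_congr rfl fun c _ => Finset.sum_congr rfl fun d _ => h1 a c d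
    have hB : (∑ a : Fin (Module.finrank ℝ L), (1 / 2 : ℝ) *
        ∑ c : Fin (Module.finrank ℝ L), ip ⁅b a, b c⁆ ⁅b a, b c⁆) = (1 / 2 : ℝ) * S := by
      rw [← Finset.mul_sum, hS]
      congr 1
      exact Finset.sum_congr rfl fun a _ => Finset.sum_congr rfl fun c _ => h2 a c
    rw [hA, hB]; ring
  refine ⟨key, fun hna => ?_⟩
  rw [key]
  have hSnonneg : ∀ a ∈ Finset.univ (α := Fin (Module.finrank ℝ L)), (0:ℝ) ≤
      ∑ c : Fin (Module.finrank ℝ L), ∑ d : Fin (Module.finrank ℝ L),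
        (ip (b d) ⁅b a, b c⁆) ^ 2 := by
    intro a _; positivity
  have hex : ∃ a c : Fin (Module.finrank ℝ L), ⁅b a, b c⁆ ≠ 0 := by
    by_contra hcon
    push_neg at hcon
    apply hna
    constructor
    intro x y
    have h0 : ∀ i, LieAlgebra.ad ℝ L (b i) = 0 := fun i =>
      b.ext fun j => by simp [LieAlgebra.ad_apply, hcon]
    have had : LieAlgebra.ad ℝ L x = 0 := by
      show (LieAlgebra.ad ℝ L : L →ₗ[ℝ] Module.End ℝ L) x = 0
      rw [← b.sum_repr x, map_sum]
      refine Finset.sum_eq_zero fun i _ => ?_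
      rw [map_smul, show (LieAlgebra.ad ℝ L : L →ₗ[ℝ] Module.End ℝ L) (b i)
        = LieAlgebra.ad ℝ L (b i) from rfl, h0 i, smul_zero]
    have := congrArg (fun f => f y) had
    simpa [LieAlgebra.ad_apply] using this
  obtain ⟨a, c, hac⟩ := hex
  have hd : ∃ d, ip (b d) ⁅b a, b c⁆ ≠ 0 := by
    by_contra hcon
    push_neg at hcon
    exact hac (b.forall_coord_eq_zero_iff.mp fun i => by
      rw [Module.Basis.coord_apply, ← ip_basis_apply ip b hb]; exact hcon i)
  obtain ⟨d, hd⟩ := hd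
  have hpos : (0:ℝ) < S := by
    rw [hS]
    refine Finset.sum_pos' hSnonneg ⟨a, Finset.mem_univ a, ?_⟩
    refine Finset.sum_pos' (fun c _ => by positivity) ⟨c, Finset.mem_univ c, ?_⟩
    refine Finset.sum_pos' (fun d _ => by positivity) ⟨d, Finset.mem_univ d, ?_⟩
    positivity
  nlinarith
end

section
/- Let 𝔫 be a finite-dimensional real nilpotent Lie algebra that is not abelian, equipped with any inner product ⟨·,·⟩. Then the Ricci tensor Ric has both positive and negative directions: there exist nonzero x, y ∈ 𝔫 with Ric(x,x) > 0 and Ric(y,y) < 0. In particular, there is no λ ∈ ℝ with Ric = λ⟨·,·⟩, so a non-abelian nilpotent Lie group admits no left-invariant Einstein metric. -/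
open scoped BigOperators

variable {L : Type*} [LieRing L] [LieAlgebra ℝ L]

section Aux

variable {n : ℕ} (ip : L →ₗ[ℝ] L →ₗ[ℝ] ℝ) (b : Module.Basis (Fin n) ℝ L)

lemma aux_ip_repr (hb : ∀ i j, ip (b i) (b j) = if i = j then (1 : ℝ) else 0) (x y : L) :
    ip x y = ∑ i, b.repr x i * b.repr y i := by
  conv_lhs => rw [← b.sum_repr x, ← b.sum_repr y]
  simp only [map_sum, map_smul, LinearMap.sum_apply, LinearMap.smul_apply, smul_eq_mul, hb]
  simp [mul_ite, Finset.mul_sum, mul_comm]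

lemma aux_ip_symm (hb : ∀ i j, ip (b i) (b j) = if i = j then (1 : ℝ) else 0) (x y : L) :
    ip x y = ip y x := by
  rw [aux_ip_repr ip b hb, aux_ip_repr ip b hb]
  exact Finset.sum_congr rfl fun i _ => mul_comm _ _

lemma aux_ip_nonneg (hb : ∀ i j, ip (b i) (b j) = if i = j then (1 : ℝ) else 0) (x : L) :
    0 ≤ ip x x := by
  rw [aux_ip_repr ip b hb]
  exact Finset.sum_nonneg fun i _ => mul_self_nonneg _

lemma aux_ip_pos (hb : ∀ i j, ip (b i) (b j) = if i = j then (1 : ℝ) else 0) {x : L}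
    (hx : x ≠ 0) : 0 < ip x x := by
  rw [aux_ip_repr ip b hb]
  have h1 : b.repr x ≠ 0 := fun hc => hx (by simpa using congrArg b.repr.symm hc)
  obtain ⟨i, hi⟩ : ∃ i, b.repr x i ≠ 0 := by
    by_contra hc
    push_neg at hc
    exact h1 (by ext i; simpa using hc i)
  exact Finset.sum_pos' (fun i _ => mul_self_nonneg _) ⟨i, Finset.mem_univ i, mul_self_pos.mpr hi⟩

end Aux

/-- On a non-abelian nilpotent metric Lie algebra, the Ricci tensor has both a positive
and a negative direction; in particular no inner product on a non-abelian nilpotent Lie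
algebra is Einstein. -/
theorem nilpotent_ricci_indefinite
    (L : Type*) [LieRing L] [LieAlgebra ℝ L] [FiniteDimensional ℝ L]
    [LieRing.IsNilpotent L] (h : ¬ IsLieAbelian L)
    (ip : L →ₗ[ℝ] L →ₗ[ℝ] ℝ) (b : Module.Basis (Fin (Module.finrank ℝ L)) ℝ L) (H : L)
    (hb : IsOrthonormalBasisFor ip b) (hH : IsMeanCurvatureVector ip H) :
    (∃ x : L, x ≠ 0 ∧ 0 < lieRicci ip b H x x) ∧
    (∃ y : L, y ≠ 0 ∧ lieRicci ip b H y y < 0) ∧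
    ¬ ∃ lam : ℝ, ∀ x y : L, lieRicci ip b H x y = lam * ip x y := by

  classical
  replace hb : ∀ i j, ip (b i) (b j) = if i = j then (1 : ℝ) else 0 := hb
  replace hH : ∀ z : L, ip H z = LinearMap.trace ℝ L (LieAlgebra.ad ℝ L z) := hH
  -- Killing form vanishes
  have hkill : killingForm ℝ L = 0 := LieModule.traceForm_eq_zero_of_isNilpotent ℝ L L
  -- H = 0
  have hH0 : H = 0 := by
    by_contra hc
    have h1 : ip H H = 0 := by
      rw [hH H]
      have h2 : _root_.IsNilpotent (LieModule.toEnd ℝ L L H) :=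
        LieModule.isNilpotent_toEnd_of_isNilpotent ℝ L L H
      exact isNilpotent_iff_eq_zero.mp (LinearMap.isNilpotent_trace_of_isNilpotent h2)
    exact (aux_ip_pos ip b hb hc).ne' h1
  -- non-bot commutator
  have hk1 : LieModule.lowerCentralSeries ℝ L L 1 ≠ ⊥ := by
    intro hc
    refine h ⟨fun u v => ?_⟩
    have hm : ⁅u, v⁆ ∈ LieModule.lowerCentralSeries ℝ L L 1 := by
      rw [LieModule.lowerCentralSeries_succ, LieModule.lowerCentralSeries_zero]
      exact LieSubmodule.lie_mem_lie (LieSubmodule.mem_top _) (LieSubmodule.mem_top _)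
    rw [hc] at hm
    exact (LieSubmodule.mem_bot _).mp hm
  obtain ⟨k, hk⟩ := (LieModule.isNilpotent_iff ℝ L L).mp inferInstance
  -- minimal index
  have hex : ∃ m, LieModule.lowerCentralSeries ℝ L L m = ⊥ := ⟨k, hk⟩
  set k0 := Nat.find hex with hk0def
  have hk0bot : LieModule.lowerCentralSeries ℝ L L k0 = ⊥ := Nat.find_spec hex
  have hk0ge : 2 ≤ k0 := by
    by_contra hc
    push_neg at hc
    exact hk1 (le_bot_iff.mp (hk0bot ▸ LieModule.antitone_lowerCentralSeries ℝ L L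
      (by omega : k0 ≤ 1)))
  set j := k0 - 1 with hjdef
  have hj1 : 1 ≤ j := by omega
  have hjsucc : j + 1 = k0 := by omega
  have hjne : LieModule.lowerCentralSeries ℝ L L j ≠ ⊥ := Nat.find_min hex (by omega)
  obtain ⟨x, hxj, hx0⟩ : ∃ x, x ∈ LieModule.lowerCentralSeries ℝ L L j ∧ x ≠ 0 := by
    by_contra hc
    push_neg at hc
    exact hjne (LieSubmodule.eq_bot_iff _ |>.mpr fun m hm => hc m hm)
  have hxcent : ∀ z : L, ⁅z, x⁆ = 0 := by
    intro z
    have hm : ⁅z, x⁆ ∈ LieModule.lowerCentralSeries ℝ L L (j + 1) := by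
      rw [LieModule.lowerCentralSeries_succ]
      exact LieSubmodule.lie_mem_lie (LieSubmodule.mem_top _) hxj
    rw [hjsucc, hk0bot] at hm
    exact (LieSubmodule.mem_bot _).mp hm
  have hx1 : x ∈ LieModule.lowerCentralSeries ℝ L L 1 :=
    LieModule.antitone_lowerCentralSeries ℝ L L hj1 hxj
  -- the commutator submodule is the span of basis brackets (via span of all brackets)
  have hlcs1 : LieSubmodule.toSubmodule (LieModule.lowerCentralSeries ℝ L L 1) =
      Submodule.span ℝ { m : L | ∃ x ∈ (⊤ : LieIdeal ℝ L),
        ∃ n ∈ (⊤ : LieSubmodule ℝ L L), ⁅x, n⁆ = m } := by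
    rw [LieModule.lowerCentralSeries_succ, LieModule.lowerCentralSeries_zero]
    exact LieSubmodule.lieIdeal_oper_eq_linear_span' ..
  -- positive direction: some basis bracket is not orthogonal to x
  obtain ⟨a0, c0, hac⟩ : ∃ a c, ip x ⁅b a, b c⁆ ≠ 0 := by
    by_contra hc
    push_neg at hc
    have key1 : ∀ (a : Fin (Module.finrank ℝ L)) (v : L), ip x ⁅b a, v⁆ = 0 := by
      intro a v
      have hv : ⁅b a, v⁆ = LieAlgebra.ad ℝ L (b a) v := rfl
      rw [hv, ← b.sum_repr v, map_sum]
      simp [LieAlgebra.ad_apply, hc]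
    have key : ∀ u v : L, ip x ⁅u, v⁆ = 0 := by
      intro u v
      have hu : ⁅u, v⁆ = -(LieAlgebra.ad ℝ L v u) := by
        rw [LieAlgebra.ad_apply, ← lie_skew]
      rw [hu, ← b.sum_repr u, map_sum, map_neg, map_sum]
      rw [neg_eq_zero]
      refine Finset.sum_eq_zero fun a _ => ?_
      have h2 : ip x ⁅v, b a⁆ = 0 := by
        rw [← lie_skew, map_neg, key1 a v, neg_zero]
      simp [LieAlgebra.ad_apply, h2]
    have hker : LieSubmodule.toSubmodule (LieModule.lowerCentralSeries ℝ L L 1) ≤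
        LinearMap.ker (ip x) := by
      rw [hlcs1]
      rw [Submodule.span_le]
      rintro m ⟨u, -, v, -, rfl⟩
      simpa using key u v
    have : ip x x = 0 := by
      simpa using hker ((LieSubmodule.mem_toSubmodule _).mpr hx1)
    exact (aux_ip_pos ip b hb hx0).ne' this
  -- Ricci tensor simplification
  have ric_eq : ∀ u v : L, lieRicci ip b H u v =
      (1 / 4 : ℝ) * ∑ a, ∑ c, ip u ⁅b a, b c⁆ * ip v ⁅b a, b c⁆
        - (1 / 2 : ℝ) * ∑ a, ip ⁅u, b a⁆ ⁅v, b a⁆ := by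
    intro u v
    rw [lieRicci, hkill, hH0]
    simp

  -- positive direction
  have hPos : ∃ x : L, x ≠ 0 ∧ 0 < lieRicci ip b H x x := by
    refine ⟨x, hx0, ?_⟩
    rw [ric_eq]
    have h2 : ∀ a, ⁅x, b a⁆ = (0 : L) := by
      intro a
      rw [← lie_skew, hxcent (b a), neg_zero]
    have hsum2 : ∑ a, ip ⁅x, b a⁆ ⁅x, b a⁆ = 0 := by
      refine Finset.sum_eq_zero fun a _ => ?_
      simp [h2 a]
    rw [hsum2, mul_zero, sub_zero]
    have hsum1 : 0 < ∑ a, ∑ c, ip x ⁅b a, b c⁆ * ip x ⁅b a, b c⁆ :=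
      Finset.sum_pos' (fun a _ => Finset.sum_nonneg fun c _ => mul_self_nonneg _)
        ⟨a0, Finset.mem_univ _, Finset.sum_pos' (fun c _ => mul_self_nonneg _)
          ⟨c0, Finset.mem_univ _, mul_self_pos.mpr hac⟩⟩
    linarith
  -- negative direction
  have hNeg : ∃ y : L, y ≠ 0 ∧ lieRicci ip b H y y < 0 := by
    set C : Submodule ℝ L := Submodule.span ℝ {m : L | ∃ u v : L, ⁅u, v⁆ = m} with hCdef
    have hrefl : LinearMap.IsRefl ip := fun u v huv => by
      rwa [aux_ip_symm ip b hb] at huv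
    have hbrmem : ∀ a c : Fin (Module.finrank ℝ L), ⁅b a, b c⁆ ∈ C :=
      fun a c => Submodule.subset_span ⟨b a, b c, rfl⟩
    have hCle : C ≤ LieSubmodule.toSubmodule (LieModule.lowerCentralSeries ℝ L L 1) := by
      rw [hCdef, Submodule.span_le]
      rintro m ⟨u, v, rfl⟩
      refine (LieSubmodule.mem_toSubmodule _).mpr ?_
      rw [LieModule.lowerCentralSeries_succ, LieModule.lowerCentralSeries_zero]
      exact LieSubmodule.lie_mem_lie (LieSubmodule.mem_top _) (LieSubmodule.mem_top _)
    have hrestr : (LinearMap.BilinForm.restrict ip C).Nondegenerate := by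
      refine LinearMap.BilinForm.Nondegenerate.ofSeparatingLeft ?_
      intro m hm
      have h1 := hm m
      have h2 : ip (m : L) (m : L) = 0 := h1
      have h3 : (m : L) = 0 := by
        by_contra hcn
        exact (aux_ip_pos ip b hb hcn).ne' h2
      exact Subtype.ext h3
    have hcompl : IsCompl C (LinearMap.BilinForm.orthogonal ip C) :=
      LinearMap.BilinForm.isCompl_orthogonal_of_restrict_nondegenerate hrefl hrestr
    have hy : ∃ y ∈ LinearMap.BilinForm.orthogonal ip C, ∃ z : L, ⁅y, z⁆ ≠ 0 := by
      by_contra hcon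
      push_neg at hcon
      have hE2 : LieModule.lowerCentralSeries ℝ L L 1 ≤ LieModule.lowerCentralSeries ℝ L L 2 := by
        rw [← LieSubmodule.toSubmodule_le_toSubmodule, hlcs1, Submodule.span_le]
        rintro m ⟨u, -, v, -, rfl⟩
        obtain ⟨c, hcC, y, hyO, rfl⟩ : ∃ c ∈ C, ∃ y ∈ LinearMap.BilinForm.orthogonal ip C,
            c + y = u := Submodule.mem_sup.mp (hcompl.sup_eq_top ▸ Submodule.mem_top)
        have hyv : ⁅y, v⁆ = 0 := hcon y hyO v
        have hsplit : ⁅c + y, v⁆ = ⁅c, v⁆ := by rw [add_lie, hyv, add_zero]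
        rw [hsplit]
        have hcE : c ∈ LieModule.lowerCentralSeries ℝ L L 1 :=
          (LieSubmodule.mem_toSubmodule _).mp (hCle hcC)
        have hm2 : ⁅v, c⁆ ∈ LieModule.lowerCentralSeries ℝ L L 2 := by
          rw [show (2 : ℕ) = 1 + 1 from rfl, LieModule.lowerCentralSeries_succ]
          exact LieSubmodule.lie_mem_lie (LieSubmodule.mem_top _) hcE
        have hneg : ⁅c, v⁆ = -⁅v, c⁆ := by rw [← lie_skew]
        rw [hneg]
        exact Submodule.neg_mem _ ((LieSubmodule.mem_toSubmodule _).mpr hm2)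
      have hmono : ∀ m : ℕ, LieModule.lowerCentralSeries ℝ L L (m + 1) ≤
          LieModule.lowerCentralSeries ℝ L L (m + 2) := by
        intro m
        induction m with
        | zero => exact hE2
        | succ q ih =>
          have e1 := LieModule.lowerCentralSeries_succ ℝ L L (q + 1)
          have e2 := LieModule.lowerCentralSeries_succ ℝ L L (q + 2)
          calc LieModule.lowerCentralSeries ℝ L L (q + 1 + 1)
              = ⁅(⊤ : LieIdeal ℝ L), LieModule.lowerCentralSeries ℝ L L (q + 1)⁆ := e1
            _ ≤ ⁅(⊤ : LieIdeal ℝ L), LieModule.lowerCentralSeries ℝ L L (q + 2)⁆ :=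
              LieSubmodule.mono_lie_right _ ih
            _ = LieModule.lowerCentralSeries ℝ L L (q + 1 + 2) := by
              rw [show q + 1 + 2 = (q + 2) + 1 by omega]
              exact e2.symm
      have hEm : ∀ m : ℕ, LieModule.lowerCentralSeries ℝ L L 1 ≤
          LieModule.lowerCentralSeries ℝ L L (m + 1) := by
        intro m
        induction m with
        | zero => exact le_rfl
        | succ p ih => exact ih.trans (hmono p)
      have hEk : LieModule.lowerCentralSeries ℝ L L 1 ≤
          LieModule.lowerCentralSeries ℝ L L k0 := by
        have h3 := hEm j
        rwa [hjsucc] at h3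
      rw [hk0bot, le_bot_iff] at hEk
      exact hk1 hEk
    obtain ⟨y, hyO, z, hz⟩ := hy
    have hy0 : y ≠ 0 := by rintro rfl; exact hz (zero_lie z)
    obtain ⟨a1, ha1⟩ : ∃ a, ⁅y, b a⁆ ≠ 0 := by
      by_contra hcl
      push_neg at hcl
      apply hz
      have hyz : ⁅y, z⁆ = LieAlgebra.ad ℝ L y z := rfl
      rw [hyz, ← b.sum_repr z, map_sum]
      simp [LieAlgebra.ad_apply, hcl]
    refine ⟨y, hy0, ?_⟩
    rw [ric_eq]
    have hterm1 : ∀ a c, ip y ⁅b a, b c⁆ = 0 := by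
      intro a c
      have h4 := hyO _ (hbrmem a c)
      rw [aux_ip_symm ip b hb]
      exact h4
    have hs1 : (∑ a, ∑ c : Fin (Module.finrank ℝ L),
        ip y ⁅b a, b c⁆ * ip y ⁅b a, b c⁆) = 0 := by
      simp [hterm1]
    have hs2 : 0 < ∑ a, ip ⁅y, b a⁆ ⁅y, b a⁆ :=
      Finset.sum_pos' (fun a _ => aux_ip_nonneg ip b hb _)
        ⟨a1, Finset.mem_univ _, aux_ip_pos ip b hb ha1⟩
    rw [hs1, mul_zero, zero_sub]
    have : 0 < (1 / 2 : ℝ) * ∑ a, ip ⁅y, b a⁆ ⁅y, b a⁆ := by linarith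
    linarith
  -- conclusion
  obtain ⟨x', hx0', hxr⟩ := hPos
  obtain ⟨y', hy0', hyr⟩ := hNeg
  refine ⟨⟨x', hx0', hxr⟩, ⟨y', hy0', hyr⟩, ?_⟩
  rintro ⟨lam, hlam⟩
  have h1 : 0 < lam * ip x' x' := hlam x' x' ▸ hxr
  have h2 : lam * ip y' y' < 0 := hlam y' y' ▸ hyr
  have h3 := aux_ip_pos ip b hb hx0'
  have h4 := aux_ip_pos ip b hb hy0'
  nlinarith
end
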